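/- Let m ≥ 3 and k ≥ 3 be integers, c ≥ 2 a real, C a finite set with |C| < m, and G a finite family of m-element sets each containing C. Suppose |G| > (e^c · k · √(ln m))^m and the number of pairs (T, U) ∈ G × G with T ∩ U ≠ C is less than 2 · (c²·k)^{-2} · |G|². Then there exist more than (1 − (c·k)^{-1}) · |G| sets T ∈ G — in particular more than (e^c · k)^m such sets — each satisfying: T ∩ U = C for more than (1 − (c·k)^{-1}) · |G| sets U ∈ G. -/

import Mathlib

/-!
Call `T ∈ G` bad if `T ∩ U ≠ C` for at least `(c·k)⁻¹·|G|` sets `U ∈ G`. Counting the pairs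
`(T, U)` with `T ∩ U ≠ C` row by row, fewer than `2·|G| / (c³·k)` sets are bad. Since `c ≥ 2` and
`k ≥ 3`, this is at most half of `(c·k)⁻¹·|G|` and at most `|G| / 12`. For `m ≥ 3` we have
`√(ln m)^m ≥ 12/11`, so `|G| > (12/11)·(e^c·k)^m` and the `11/12`-fraction of good sets still
exceeds `(e^c·k)^m`.
-/

open Finset

namespace Finset

variable {α β : Type*} (s : Finset α) (t : Finset β) (r : α → β → Prop) [∀ a, DecidablePred (r a)]

theorem card_product_filter_eq_sum_card_filter :
    #((s ×ˢ t).filter fun q => r q.1 q.2) = ∑ a ∈ s, #(t.filter (r a)) := by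
  rw [card_filter, sum_product]
  simp only [card_filter]

/-- Markov's inequality for the row counts of a relation. -/
theorem card_filter_mul_le_card_product_filter (δ : ℝ) :
    (#(s.filter fun a => δ ≤ #(t.filter (r a))) : ℝ) * δ ≤
      #((s ×ˢ t).filter fun q => r q.1 q.2) := by
  rw [card_product_filter_eq_sum_card_filter, Nat.cast_sum, ← nsmul_eq_mul]
  calc _ ≤ ∑ a ∈ s.filter fun a => δ ≤ #(t.filter (r a)), (#(t.filter (r a)) : ℝ) :=
        card_nsmul_le_sum _ _ _ fun a ha => (mem_filter.1 ha).2
    _ ≤ ∑ a ∈ s, (#(t.filter (r a)) : ℝ) :=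
        sum_le_sum_of_subset_of_nonneg (filter_subset _ _) fun _ _ _ => Nat.cast_nonneg _

theorem card_filter_not_lt_mul_le_card_product_filter_not (ε : ℝ) :
    (#(s.filter fun a => ¬ (1 - ε) * #t < #(t.filter (r a))) : ℝ) * (ε * #t) ≤
      #((s ×ˢ t).filter fun q => ¬ r q.1 q.2) := by
  convert card_filter_mul_le_card_product_filter s t (fun a b => ¬ r a b) (ε * #t) using 4
  refine filter_congr fun a _ => ?_
  have hsplit : (#(t.filter (r a)) : ℝ) + #(t.filter fun b => ¬ r a b) = #t := by
    exact_mod_cast card_filter_add_card_filter_not (r a)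
  rw [not_lt]
  constructor <;> intro h <;> linarith

end Finset

theorem twelve_div_eleven_le_sqrt_log_pow {m : ℕ} (hm : 3 ≤ m) :
    (12 / 11 : ℝ) ≤ Real.sqrt (Real.log m) ^ m := by
  have hlog : (1.0986 : ℝ) ≤ Real.log m := by
    have h3 : Real.log 3 ≤ Real.log m := Real.log_le_log (by norm_num) (by exact_mod_cast hm)
    linarith [Real.log_three_gt_d9]
  set s := Real.sqrt (Real.log m)
  have hs2 : s ^ 2 = Real.log m := Real.sq_sqrt (by linarith)
  have hs : (1.04 : ℝ) ≤ s := by nlinarith [Real.sqrt_nonneg (Real.log m)]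
  calc (12 / 11 : ℝ) ≤ s * s ^ 2 := by rw [hs2]; nlinarith
    _ = s ^ 3 := by ring
    _ ≤ s ^ m := pow_le_pow_right₀ (by linarith) hm

theorem psi4_many_sets_general {α : Type*} [DecidableEq α]
    (m k : ℕ) (hm : 3 ≤ m) (hk : 3 ≤ k) (c : ℝ) (hc : 2 ≤ c)
    (C : Finset α)
    (G : Finset (Finset α))
    (hGbig : (Real.exp c * (k : ℝ) * Real.sqrt (Real.log m)) ^ m < (G.card : ℝ))
    (hpairs : (((G ×ˢ G).filter (fun p => p.1 ∩ p.2 ≠ C)).card : ℝ) <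
      2 * ((c ^ 2 * (k : ℝ)) ^ 2)⁻¹ * (G.card : ℝ) ^ 2) :
    (1 - (c * (k : ℝ))⁻¹) * (G.card : ℝ) <
      ((G.filter (fun T => (1 - (c * (k : ℝ))⁻¹) * (G.card : ℝ) <
        ((G.filter (fun U => T ∩ U = C)).card : ℝ))).card : ℝ) ∧
    (Real.exp c * (k : ℝ)) ^ m <
      ((G.filter (fun T => (1 - (c * (k : ℝ))⁻¹) * (G.card : ℝ) <
        ((G.filter (fun U => T ∩ U = C)).card : ℝ))).card : ℝ) := by
  set n : ℝ := (#G : ℝ)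
  set good := G.filter fun T => (1 - (c * k)⁻¹) * n < #(G.filter fun U => T ∩ U = C)
  set bad := G.filter fun T => ¬ (1 - (c * k)⁻¹) * n < #(G.filter fun U => T ∩ U = C)
  have hk3 : (3 : ℝ) ≤ k := by exact_mod_cast hk
  have hck : 0 < c * k := by positivity
  have hE : 0 < (Real.exp c * k) ^ m := by positivity
  have hS := twelve_div_eleven_le_sqrt_log_pow hm
  have hn : (Real.exp c * k) ^ m * Real.sqrt (Real.log m) ^ m < n := by rwa [← mul_pow]
  have hnpos : 0 < n := lt_of_le_of_lt (by positivity) hn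
  have hgood : (#good : ℝ) = n - #bad := by
    rw [eq_sub_iff_add_eq, ← Nat.cast_add, card_filter_add_card_filter_not]
  have hbad : (#bad : ℝ) * (c ^ 3 * k) < 2 * n := by
    have hmarkov := card_filter_not_lt_mul_le_card_product_filter_not G G
      (fun T U => T ∩ U = C) (c * k)⁻¹
    have hεn : 0 < (c * k)⁻¹ * n := by positivity
    have hrhs : 2 * ((c ^ 2 * k) ^ 2)⁻¹ * n ^ 2 = 2 * n / (c ^ 3 * k) * ((c * k)⁻¹ * n) := by
      field_simp
    have := lt_of_mul_lt_mul_right ((hmarkov.trans_lt hpairs).trans_eq hrhs) hεn.le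
    rwa [lt_div_iff₀ (by positivity)] at this
  have hc3k : 24 ≤ c ^ 3 * k := by nlinarith [sq_nonneg (c - 2)]
  have hbad_lt : (#bad : ℝ) < (c * k)⁻¹ * n := by
    rw [inv_mul_eq_div, lt_div_iff₀ hck]
    nlinarith [mul_nonneg (mul_nonneg (Nat.cast_nonneg #bad : (0 : ℝ) ≤ #bad) hck.le)
      (by nlinarith : (0 : ℝ) ≤ c ^ 2 - 4)]
  constructor
  · rw [hgood]
    linarith
  · rw [hgood]
    nlinarith [mul_le_mul_of_nonneg_left hc3k (Nat.cast_nonneg #bad : (0 : ℝ) ≤ #bad)]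

/-- Most members of `G` meet most other members exactly in `C`.  If
`|G| > (e^c·k·√(ln m))^m` and fewer than `2·(c²·k)^{-2}·|G|²` ordered pairs
`(T,U) ∈ G × G` have `T ∩ U ≠ C`, then more than `(1 − (c·k)⁻¹)·|G|` sets
`T ∈ G` — in particular more than `(e^c·k)^m` such sets — satisfy `ψ₄(T)`:
`T ∩ U = C` for more than `(1 − (c·k)⁻¹)·|G|` sets `U ∈ G`. -/
theorem psi4_many_sets {α : Type*} [DecidableEq α]
    (m k : ℕ) (hm : 3 ≤ m) (hk : 3 ≤ k) (c : ℝ) (hc : 2 ≤ c)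
    (C : Finset α) (hC : C.card < m)
    (G : Finset (Finset α)) (hGcard : ∀ A ∈ G, A.card = m) (hGC : ∀ A ∈ G, C ⊆ A)
    (hGbig : (Real.exp c * (k : ℝ) * Real.sqrt (Real.log m)) ^ m < (G.card : ℝ))
    (hpairs : (((G ×ˢ G).filter (fun p => p.1 ∩ p.2 ≠ C)).card : ℝ) <
      2 * ((c ^ 2 * (k : ℝ)) ^ 2)⁻¹ * (G.card : ℝ) ^ 2) :
    (1 - (c * (k : ℝ))⁻¹) * (G.card : ℝ) <
      ((G.filter (fun T => (1 - (c * (k : ℝ))⁻¹) * (G.card : ℝ) <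
        ((G.filter (fun U => T ∩ U = C)).card : ℝ))).card : ℝ) ∧
    (Real.exp c * (k : ℝ)) ^ m <
      ((G.filter (fun T => (1 - (c * (k : ℝ))⁻¹) * (G.card : ℝ) <
        ((G.filter (fun U => T ∩ U = C)).card : ℝ))).card : ℝ) :=
  psi4_many_sets_general m k hm hk c hc C G hGbig hpairs
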